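/- arXiv:2401.17421 — 2 statements merged into one kernel-verified Lean document; each statement's English description precedes it below -/
import Mathlib

section
/- Let e = {h_1, h_2} be a separating edge of Γ, splitting Γ into Γ_1 and Γ_2 as in the context, with leg-value subsequences A_1, A_2 of sums s_1, s_2. Let Q = x_{h_1}^{c_1} x_{h_2}^{c_2} Q_1 Q_2 be a monomial, where Q_1 (resp. Q_2) involves only the variables x_h for non-leg half-edges h lying in Γ_1 (resp. Γ_2). Assume the sums S^Γ_{A,r}(Q), S^{Γ_1}_{(A_1,−s_1),r}(Q_1) and S^{Γ_2}_{(A_2,−s_2),r}(Q_2) are all eventually polynomial in r, so their constant terms are defined. Then S^Γ_{A,0}(Q) = S^{Γ_1}_{(A_1,−s_1),0}(Q_1) · (−s_1)^{c_1} (−s_2)^{c_2} · S^{Γ_2}_{(A_2,−s_2),0}(Q_2). -/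
open scoped BigOperators

/-- A graph of genus `g` with `n` legs: vertices, half-edges, an involution,
a root map, a list of `n` legs which are exactly the fixed points of the
involution, and a genus function. -/
structure LegGraph (n : ℕ) where
  V : Type
  H : Type
  [fintypeV : Fintype V]
  [fintypeH : Fintype H]
  [decEqV : DecidableEq V]
  [decEqH : DecidableEq H]
  ι : H → H
  ι_invol : ∀ h, ι (ι h) = h
  root : H → V
  leg : Fin n → H
  leg_inj : Function.Injective leg
  leg_iff : ∀ h, ι h = h ↔ ∃ i, leg i = h
  genus : V → ℕ

attribute [instance] LegGraph.fintypeV LegGraph.fintypeH LegGraph.decEqV LegGraph.decEqH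

namespace LegGraph

variable {n : ℕ}

/-- Connectedness: the equivalence relation on `V` generated by relating `r h` and
`r (i h)` has exactly one class. -/
def Connected (G : LegGraph n) : Prop :=
  ∀ v w : G.V, Relation.EqvGen (fun a b => ∃ h : G.H, G.root h = a ∧ G.root (G.ι h) = b) v w

/-- The number of edges: pairs `{h, ι h}` with `ι h ≠ h`. -/
def edgeCard (G : LegGraph n) : ℕ :=
  (Finset.univ.filter fun h : G.H => G.ι h ≠ h).card / 2

/-- The first Betti number `#E - #V + 1` (as an integer). -/
def h1 (G : LegGraph n) : ℤ :=
  (G.edgeCard : ℤ) - (Fintype.card G.V : ℤ) + 1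

/-- The number `n(v)` of half-edges rooted at a vertex `v`. -/
def deg (G : LegGraph n) (v : G.V) : ℕ :=
  (Finset.univ.filter fun h : G.H => G.root h = v).card

/-- The (total) genus of the graph: `∑ g(v) + h¹(Γ)`. -/
def genusTot (G : LegGraph n) : ℤ :=
  (∑ v : G.V, (G.genus v : ℤ)) + G.h1

/-- A weighting for `A` mod `r` (with twist `k`). -/
def IsWeighting (G : LegGraph n) (k : ℤ) (A : Fin n → ℤ) (r : ℕ) (w : G.H → Fin r) : Prop :=
  (∀ i : Fin n, ((w (G.leg i) : ℕ) : ℤ) % (r : ℤ) = A i % (r : ℤ)) ∧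
  (∀ h : G.H, G.ι h ≠ h → (((w h : ℕ) : ℤ) + ((w (G.ι h) : ℕ) : ℤ)) % (r : ℤ) = 0) ∧
  (∀ v : G.V,
    (∑ h ∈ Finset.univ.filter (fun h : G.H => G.root h = v), ((w h : ℕ) : ℤ)) % (r : ℤ)
      = (k * (2 * (G.genus v : ℤ) - 2 + (G.deg v : ℤ))) % (r : ℤ))

open scoped Classical in
/-- The finite set `W^Γ_{A,r}` of weightings for `A` mod `r` (with twist `k`). -/
noncomputable def weightings (G : LegGraph n) (k : ℤ) (A : Fin n → ℤ) (r : ℕ) :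
    Finset (G.H → Fin r) :=
  Finset.univ.filter fun w => G.IsWeighting k A r w

/-- The non-leg half-edges, indexing the variables of the polynomials `Q`. -/
def NonLeg (G : LegGraph n) : Type := {h : G.H // G.ι h ≠ h}

/-- The sum `S^Γ_{A,r}(Q) = r^{-h¹(Γ)} ∑_{w ∈ W^Γ_{A,r}} Q((w h)_h)`. -/
noncomputable def S (G : LegGraph n) (k : ℤ) (A : Fin n → ℤ)
    (Q : MvPolynomial G.NonLeg ℤ) (r : ℕ) : ℚ :=
  (r : ℚ) ^ (-G.h1) * ∑ w ∈ G.weightings k A r,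
    ((MvPolynomial.eval (fun h : G.NonLeg => ((w h.1 : ℕ) : ℤ)) Q : ℤ) : ℚ)

end LegGraph

/-- A function `ℕ → ℚ` is eventually polynomial. -/
def EvPoly (f : ℕ → ℚ) : Prop :=
  ∃ p : Polynomial ℚ, ∃ N : ℕ, ∀ r : ℕ, N ≤ r → f r = p.eval (r : ℚ)

open scoped Classical in
/-- The constant term of the polynomial expression of an eventually polynomial function
(junk value `0` otherwise).  When `EvPoly f` holds this is well defined, i.e. independent
of the choice of polynomial. -/
noncomputable def constTerm (f : ℕ → ℚ) : ℚ :=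
  if h : EvPoly f then (Classical.choose h).eval 0 else 0

/-- `S^Γ_{A,0}(Q)`: the constant term of the eventually polynomial function
`r ↦ S^Γ_{A,r}(Q)`. -/
noncomputable def LegGraph.S0 {n : ℕ} (G : LegGraph n) (k : ℤ) (A : Fin n → ℤ)
    (Q : MvPolynomial G.NonLeg ℤ) : ℚ :=
  constTerm fun r => G.S k A Q r

/-- `m mod r` as an element of `Fin r = {0, …, r-1}`, for an integer `m`. -/
def intFin (r : ℕ) (hr : 0 < r) (m : ℤ) : Fin r :=
  ⟨(m % (r : ℤ)).toNat, by
    have h0 : (0 : ℤ) < (r : ℤ) := by exact_mod_cast hr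
    have h1 : m % (r : ℤ) < (r : ℤ) := Int.emod_lt_of_pos m h0
    have h2 : 0 ≤ m % (r : ℤ) := Int.emod_nonneg m (by omega)
    omega⟩
namespace LegGraph

variable {n : ℕ}

theorem not_leg_of_not_fixed (G : LegGraph n) {h : G.H} (hh : G.ι h ≠ h) :
    ∀ i, G.leg i ≠ h :=
  fun i hi => hh ((G.leg_iff h).2 ⟨i, hi⟩)

/-- The graph `Γ_e` obtained by cutting the edge `e = {h₁, h₂}`: the involution now fixes
`h₁` and `h₂`, which become the two new legs `ℓ_{n+1} = h₁` and `ℓ_{n+2} = h₂`. -/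
def cut (G : LegGraph n) (h₁ h₂ : G.H) (he : G.ι h₁ = h₂) (hne : h₁ ≠ h₂) :
    LegGraph (n + 2) where
  V := G.V
  H := G.H
  ι h := if h = h₁ then h₁ else if h = h₂ then h₂ else G.ι h
  ι_invol := by
    have he' : G.ι h₂ = h₁ := by rw [← he, G.ι_invol]
    intro h
    rcases eq_or_ne h h₁ with rfl | e1
    · simp
    · rcases eq_or_ne h h₂ with rfl | e2
      · simp [Ne.symm hne]
      · have hι1 : G.ι h ≠ h₁ := by
          intro hh
          exact e2 (by rw [← G.ι_invol h, hh, he])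
        have hι2 : G.ι h ≠ h₂ := by
          intro hh
          exact e1 (by rw [← G.ι_invol h, hh, he'])
        simp [e1, e2, hι1, hι2, G.ι_invol]
  root := G.root
  leg := Fin.snoc (Fin.snoc G.leg h₁) h₂
  leg_inj := by
    have hb₁ : G.ι h₁ ≠ h₁ := by rw [he]; exact Ne.symm hne
    have he' : G.ι h₂ = h₁ := by rw [← he, G.ι_invol]
    have hb₂ : G.ι h₂ ≠ h₂ := by rw [he']; exact hne
    have hl₁ := G.not_leg_of_not_fixed hb₁
    have hl₂ := G.not_leg_of_not_fixed hb₂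
    intro i j hij
    induction i using Fin.lastCases with
    | last =>
      induction j using Fin.lastCases with
      | last => rfl
      | cast j =>
        rw [Fin.snoc_last, Fin.snoc_castSucc] at hij
        induction j using Fin.lastCases with
        | last => rw [Fin.snoc_last] at hij; exact absurd hij.symm hne
        | cast j => rw [Fin.snoc_castSucc] at hij; exact absurd hij.symm (hl₂ j)
    | cast i =>
      induction j using Fin.lastCases with
      | last =>
        rw [Fin.snoc_last, Fin.snoc_castSucc] at hij
        induction i using Fin.lastCases with
        | last => rw [Fin.snoc_last] at hij; exact absurd hij hne
        | cast i => rw [Fin.snoc_castSucc] at hij; exact absurd hij (hl₂ i)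
      | cast j =>
        rw [Fin.snoc_castSucc, Fin.snoc_castSucc] at hij
        induction i using Fin.lastCases with
        | last =>
          induction j using Fin.lastCases with
          | last => rfl
          | cast j =>
            rw [Fin.snoc_last, Fin.snoc_castSucc] at hij
            exact absurd hij.symm (hl₁ j)
        | cast i =>
          induction j using Fin.lastCases with
          | last =>
            rw [Fin.snoc_last, Fin.snoc_castSucc] at hij
            exact absurd hij (hl₁ i)
          | cast j =>
            rw [Fin.snoc_castSucc, Fin.snoc_castSucc] at hij
            rw [G.leg_inj hij]
  genus := G.genus
  leg_iff := by
    have hb₁ : G.ι h₁ ≠ h₁ := by rw [he]; exact Ne.symm hne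
    have he' : G.ι h₂ = h₁ := by rw [← he, G.ι_invol]
    intro h
    constructor
    · intro hfix
      rcases eq_or_ne h h₁ with rfl | e1
      · exact ⟨(Fin.last n).castSucc, by
          rw [Fin.snoc_castSucc, Fin.snoc_last]⟩
      · rcases eq_or_ne h h₂ with rfl | e2
        · exact ⟨Fin.last (n + 1), by rw [Fin.snoc_last]⟩
        · simp only [if_neg e1, if_neg e2] at hfix
          obtain ⟨i, hi⟩ := (G.leg_iff h).1 hfix
          exact ⟨i.castSucc.castSucc, by rw [Fin.snoc_castSucc, Fin.snoc_castSucc]; exact hi⟩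
    · rintro ⟨i, rfl⟩
      induction i using Fin.lastCases with
      | last =>
        rw [Fin.snoc_last]
        simp [Ne.symm hne]
      | cast i =>
        rw [Fin.snoc_castSucc]
        induction i using Fin.lastCases with
        | last => rw [Fin.snoc_last]; simp
        | cast i =>
          rw [Fin.snoc_castSucc]
          have h1 := G.not_leg_of_not_fixed hb₁ i
          have h2 := G.not_leg_of_not_fixed (show G.ι h₂ ≠ h₂ by rw [he']; exact hne) i
          show (if G.leg i = h₁ then h₁ else if G.leg i = h₂ then h₂ else G.ι (G.leg i))
              = G.leg i
          rw [if_neg h1, if_neg h2]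
          exact (G.leg_iff (G.leg i)).2 ⟨i, rfl⟩

end LegGraph
namespace LegGraph

variable {n : ℕ}

/-- The graph `Γ'` obtained from `Γ` by attaching one new leg at every vertex. -/
noncomputable def addLegs (G : LegGraph n) : LegGraph (n + Fintype.card G.V) where
  V := G.V
  H := G.H ⊕ G.V
  ι := Sum.map G.ι id
  ι_invol := by rintro (h | v) <;> simp [G.ι_invol]
  root := Sum.elim G.root id
  leg i :=
    if hi : (i : ℕ) < n then Sum.inl (G.leg ⟨(i : ℕ), hi⟩)
    else Sum.inr ((Fintype.equivFin G.V).symm ⟨(i : ℕ) - n, by have := i.isLt; omega⟩)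
  leg_inj := by
    intro i j hij
    beta_reduce at hij
    by_cases hi : (i : ℕ) < n <;> by_cases hj : (j : ℕ) < n
    · rw [dif_pos hi, dif_pos hj] at hij
      have h2 := G.leg_inj (Sum.inl_injective hij)
      have h3 : (i : ℕ) = (j : ℕ) := by simpa using congrArg Fin.val h2
      exact Fin.ext h3
    · rw [dif_pos hi, dif_neg hj] at hij
      exact absurd hij (by simp)
    · rw [dif_neg hi, dif_pos hj] at hij
      exact absurd hij (by simp)
    · rw [dif_neg hi, dif_neg hj] at hij
      have h2 := (Fintype.equivFin G.V).symm.injective (Sum.inr_injective hij)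
      have h3 : (i : ℕ) - n = (j : ℕ) - n := by simpa using congrArg Fin.val h2
      exact Fin.ext (by omega)
  leg_iff := by
    rintro (h | v)
    · constructor
      · intro hfix
        have : G.ι h = h := Sum.inl_injective hfix
        obtain ⟨i, hi⟩ := (G.leg_iff h).1 this
        refine ⟨⟨(i : ℕ), by have := i.isLt; omega⟩, ?_⟩
        beta_reduce
        rw [dif_pos i.isLt]
        exact congrArg Sum.inl (by rw [show (⟨(i : ℕ), i.isLt⟩ : Fin n) = i from rfl, hi])
      · rintro ⟨i, hi⟩
        beta_reduce at hi
        by_cases h' : (i : ℕ) < n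
        · rw [dif_pos h'] at hi
          have := Sum.inl_injective hi
          have hfix : G.ι h = h := (G.leg_iff h).2 ⟨⟨(i : ℕ), h'⟩, this⟩
          exact congrArg Sum.inl hfix
        · rw [dif_neg h'] at hi
          exact absurd hi (by simp)
    · constructor
      · intro _
        refine ⟨⟨n + (Fintype.equivFin G.V v : ℕ), by
            have := (Fintype.equivFin G.V v).isLt; omega⟩, ?_⟩
        beta_reduce
        rw [dif_neg (by simp only [Fin.val_mk]; omega)]
        refine congrArg Sum.inr ?_
        rw [Equiv.symm_apply_eq]
        exact Fin.ext (by simp)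
      · intro _
        rfl
  genus := G.genus

end LegGraph
/-- The data exhibiting an edge `e = {h₁, h₂}` of `Γ` as a separating edge splitting `Γ`
into two connected graphs `Γ₁` (containing the root of `h₁`, with one new leg `ℓ'` at the
root of `h₁`, placed last) and `Γ₂` (containing the root of `h₂`, with one new leg `ℓ''`
at the root of `h₂`, placed last). -/
structure EdgeSplit {n n₁ n₂ : ℕ} (G : LegGraph n) (G₁ : LegGraph (n₁ + 1))
    (G₂ : LegGraph (n₂ + 1)) (h₁ h₂ : G.H) where
  he : G.ι h₁ = h₂
  hne : h₁ ≠ h₂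
  conn : G.Connected
  conn₁ : G₁.Connected
  conn₂ : G₂.Connected
  eV : G.V ≃ G₁.V ⊕ G₂.V
  eH : G.H ≃ G₁.H ⊕ G₂.H
  σ : Fin n ≃ Fin n₁ ⊕ Fin n₂
  map_h₁ : eH h₁ = Sum.inl (G₁.leg (Fin.last n₁))
  map_h₂ : eH h₂ = Sum.inr (G₂.leg (Fin.last n₂))
  ι_compat : ∀ h : G.H, h ≠ h₁ → h ≠ h₂ → eH (G.ι h) = Sum.map G₁.ι G₂.ι (eH h)
  root_compat : ∀ h : G.H, eV (G.root h) = Sum.map G₁.root G₂.root (eH h)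
  leg_compat : ∀ i : Fin n, eH (G.leg i) =
    Sum.map (fun j : Fin n₁ => G₁.leg j.castSucc) (fun j : Fin n₂ => G₂.leg j.castSucc) (σ i)
  genus_compat : ∀ v : G.V, G.genus v = Sum.elim G₁.genus G₂.genus (eV v)

/-- The class of graphs obtained from a given graph by repeatedly cutting edges. -/
inductive CutDesc : {m : ℕ} → LegGraph m → {m' : ℕ} → LegGraph m' → Prop
  | refl {m : ℕ} (G : LegGraph m) : CutDesc G G
  | cut {m m' : ℕ} (G : LegGraph m) (G' : LegGraph m') (h₁ h₂ : G'.H)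
      (he : G'.ι h₁ = h₂) (hne : h₁ ≠ h₂) :
      CutDesc G G' → CutDesc G (G'.cut h₁ h₂ he hne)

/-- The class of graphs obtained from a given graph by adding legs and repeatedly
cutting edges. -/
inductive Desc : {m : ℕ} → LegGraph m → {m' : ℕ} → LegGraph m' → Prop
  | refl {m : ℕ} (G : LegGraph m) : Desc G G
  | cut {m m' : ℕ} (G : LegGraph m) (G' : LegGraph m') (h₁ h₂ : G'.H)
      (he : G'.ι h₁ = h₂) (hne : h₁ ≠ h₂) :
      Desc G G' → Desc G (G'.cut h₁ h₂ he hne)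
  | addLegs {m m' : ℕ} (G : LegGraph m) (G' : LegGraph m') :
      Desc G G' → Desc G G'.addLegs

/-!
A weighting of `Γ` mod `r` is a `ZMod r`-valued flow on `Γ` (opposite values on the two halves of
an edge, zero sum at each vertex) with prescribed values at the legs. Summing the vertex
conditions over the vertices of `Γ₁`, the two halves of every edge of `Γ₁` cancel, so the
weight at `h₁` is forced to be `-s₁ mod r`, and likewise the weight at `h₂` is `-s₂ mod r`.
Hence restriction to the two sides is a bijection
`W^Γ_{A,r} ≃ W^{Γ₁}_{(A₁,-s₁),r} × W^{Γ₂}_{(A₂,-s₂),r}`, with inverse gluing along `e`, which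
is where `∑ A = 0` enters. As `h¹` is additive, `S^Γ_{A,r}(Q)` factors as
`S^{Γ₁}(Q₁) · (-s₁ mod r)^{c₁} (-s₂ mod r)^{c₂} · S^{Γ₂}(Q₂)`. Finally, for `r > |s|`, `s mod r`
is a polynomial in `r` with constant term `s`, and constant terms are multiplicative.
-/

open Finset Filter

def HasConstTerm (f : ℕ → ℚ) (c : ℚ) : Prop :=
  ∃ p : Polynomial ℚ, (∀ᶠ r in atTop, f r = p.eval (r : ℚ)) ∧ p.eval 0 = c

theorem EvPoly.hasConstTerm {f : ℕ → ℚ} (hf : EvPoly f) : HasConstTerm f (constTerm f) := by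
  obtain ⟨N, hN⟩ := Classical.choose_spec hf
  exact ⟨Classical.choose hf, eventually_atTop.2 ⟨N, hN⟩, by rw [constTerm, dif_pos hf]⟩

namespace HasConstTerm

variable {f g : ℕ → ℚ} {a b : ℚ}

theorem constTerm_eq (hf : HasConstTerm f a) : constTerm f = a := by
  obtain ⟨p, hp, rfl⟩ := hf
  obtain ⟨q, hq, hq0⟩ := (EvPoly.hasConstTerm ⟨p, eventually_atTop.1 hp⟩)
  rw [← hq0, Polynomial.eq_of_infinite_eval_eq q p ?_]
  obtain ⟨N, hN⟩ := eventually_atTop.1 (hp.and hq)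
  refine ((Set.Ici_infinite N).image Nat.cast_injective.injOn).mono ?_
  rintro _ ⟨r, hr, rfl⟩
  exact (hN r hr).2.symm.trans (hN r hr).1

theorem congr (hf : HasConstTerm f a) (hfg : f =ᶠ[atTop] g) : HasConstTerm g a := by
  obtain ⟨p, hp, hp0⟩ := hf
  exact ⟨p, hfg.symm.trans hp, hp0⟩

theorem mul (hf : HasConstTerm f a) (hg : HasConstTerm g b) :
    HasConstTerm (fun r => f r * g r) (a * b) := by
  obtain ⟨p, hp, rfl⟩ := hf
  obtain ⟨q, hq, rfl⟩ := hg
  refine ⟨p * q, (hp.and hq).mono fun r hr => ?_, Polynomial.eval_mul⟩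
  rw [Polynomial.eval_mul, ← hr.1, ← hr.2]

theorem pow (hf : HasConstTerm f a) (k : ℕ) : HasConstTerm (fun r => f r ^ k) (a ^ k) := by
  obtain ⟨p, hp, rfl⟩ := hf
  refine ⟨p ^ k, hp.mono fun r hr => ?_, Polynomial.eval_pow _⟩
  rw [Polynomial.eval_pow, ← hr]

end HasConstTerm

/-- For `r > |s|`, `s mod r` is `s` or `s + r` according to the sign of `s`. -/
theorem hasConstTerm_intCast_emod (s : ℤ) : HasConstTerm (fun r => ((s % r : ℤ) : ℚ)) s := by
  have hlarge : ∀ᶠ r : ℕ in atTop, |s| < r := eventually_gt_atTop s.natAbs |>.mono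
    fun r hr => by rw [Int.abs_eq_natAbs]; exact_mod_cast hr
  rcases le_or_gt 0 s with hs | hs
  · refine ⟨Polynomial.C (s : ℚ), hlarge.mono fun r hr => ?_, by simp⟩
    dsimp only
    rw [Int.emod_eq_of_lt hs (lt_of_abs_lt hr), Polynomial.eval_C]
  · refine ⟨Polynomial.C (s : ℚ) + Polynomial.X, hlarge.mono fun r hr => ?_, by simp⟩
    dsimp only
    rw [← Int.add_emod_right, Int.emod_eq_of_lt (by linarith [neg_abs_le s]) (by linarith)]
    simp

namespace LegGraph

variable {m : ℕ} (G : LegGraph m)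

theorem image_leg : univ.image G.leg = univ.filter fun h => G.ι h = h := by
  ext h
  simp [G.leg_iff h]

theorem card_filter_ne_add : #(univ.filter fun h => G.ι h ≠ h) + m = Fintype.card G.H := by
  have hsplit := card_filter_add_card_filter_not (s := univ) fun h => G.ι h = h
  rw [← image_leg, card_image_of_injective _ G.leg_inj, card_univ, Fintype.card_fin] at hsplit
  rw [← card_univ, ← hsplit, add_comm]

theorem even_card_filter_ne : Even #(univ.filter fun h => G.ι h ≠ h) := by
  have hsum : ∑ _h ∈ univ.filter fun h => G.ι h ≠ h, (1 : ZMod 2) = 0 := by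
    refine sum_involution (fun h _ => G.ι h) (fun _ _ => by decide)
      (fun h hh _ => by simpa using (mem_filter.1 hh).2) (fun h hh => ?_) (fun h _ => G.ι_invol h)
    simpa [G.ι_invol, eq_comm] using hh
  rw [sum_const, nsmul_one, ZMod.natCast_eq_zero_iff] at hsum
  exact even_iff_two_dvd.2 hsum

variable {M : Type*} [AddCommGroup M]

def IsFlow (f : G.H → M) : Prop :=
  (∀ h, G.ι h ≠ h → f h + f (G.ι h) = 0) ∧ ∀ v, ∑ h ∈ univ.filter fun h => G.root h = v, f h = 0

variable {G}

theorem IsFlow.sum_legs_eq_zero {f : G.H → M} (hf : G.IsFlow f) : ∑ i, f (G.leg i) = 0 := by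
  have htotal : ∑ h, f h = 0 := by
    rw [← sum_fiberwise univ G.root f]
    exact sum_eq_zero fun v _ => hf.2 v
  have hedges : ∑ h ∈ univ.filter fun h => G.ι h ≠ h, f h = 0 :=
    sum_involution (fun h _ => G.ι h) (fun h hh => hf.1 h (mem_filter.1 hh).2)
      (fun h hh _ => (mem_filter.1 hh).2) (fun h hh => by simpa [G.ι_invol, eq_comm] using hh)
      (fun h _ => G.ι_invol h)
  rw [← sum_filter_add_sum_filter_not univ (fun h => G.ι h = h), hedges, add_zero,
    ← image_leg, sum_image fun i _ j _ hij => G.leg_inj hij] at htotal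
  exact htotal

theorem mem_weightings_zero_iff {A : Fin m → ℤ} {r : ℕ} {w : G.H → Fin r} :
    w ∈ G.weightings 0 A r ↔
      (∀ i, ((w (G.leg i) : ℕ) : ZMod r) = A i) ∧ G.IsFlow fun h => ((w h : ℕ) : ZMod r) := by
  have hcast : ∀ a b : ℤ, a % r = b % r ↔ (a : ZMod r) = b := fun a b =>
    (ZMod.intCast_eq_intCast_iff' a b r).symm
  have hcast0 : ∀ a : ℤ, a % r = 0 ↔ (a : ZMod r) = 0 := fun a => by
    simpa using hcast a 0
  simp only [weightings, IsWeighting, IsFlow, mem_filter, mem_univ, true_and, zero_mul,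
    Int.zero_emod, hcast, hcast0, Int.cast_add, Int.cast_sum, Int.cast_natCast]

end LegGraph

namespace EdgeSplit

variable {n n₁ n₂ : ℕ} {G : LegGraph n} {G₁ : LegGraph (n₁ + 1)} {G₂ : LegGraph (n₂ + 1)}
  {h₁ h₂ : G.H} (E : EdgeSplit G G₁ G₂ h₁ h₂)

def swap : EdgeSplit G G₂ G₁ h₂ h₁ where
  he := by rw [← E.he, G.ι_invol]
  hne := E.hne.symm
  conn := E.conn
  conn₁ := E.conn₂
  conn₂ := E.conn₁
  eV := E.eV.trans (Equiv.sumComm _ _)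
  eH := E.eH.trans (Equiv.sumComm _ _)
  σ := E.σ.trans (Equiv.sumComm _ _)
  map_h₁ := by simp [E.map_h₂]
  map_h₂ := by simp [E.map_h₁]
  ι_compat h hh₂ hh₁ := by simp only [Equiv.trans_apply, E.ι_compat h hh₁ hh₂]; cases E.eH h <;> rfl
  root_compat h := by simp only [Equiv.trans_apply, E.root_compat h]; cases E.eH h <;> rfl
  leg_compat i := by simp only [Equiv.trans_apply, E.leg_compat i]; cases E.σ i <;> rfl
  genus_compat v := by simp only [Equiv.trans_apply, E.genus_compat v]; cases E.eV v <;> rfl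

include E in
theorem edgeCard_eq : G.edgeCard = G₁.edgeCard + G₂.edgeCard + 1 := by
  have hH : Fintype.card G.H = Fintype.card G₁.H + Fintype.card G₂.H := by
    rw [Fintype.card_congr E.eH, Fintype.card_sum]
  have hn : n = n₁ + n₂ := by
    simpa using Fintype.card_congr E.σ
  have h := G.card_filter_ne_add
  have h₁ := G₁.card_filter_ne_add
  have h₂ := G₂.card_filter_ne_add
  obtain ⟨k₁, hk₁⟩ := G₁.even_card_filter_ne
  obtain ⟨k₂, hk₂⟩ := G₂.even_card_filter_ne
  simp only [LegGraph.edgeCard]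
  omega

include E in
theorem h1_eq : G.h1 = G₁.h1 + G₂.h1 := by
  simp only [LegGraph.h1, E.edgeCard_eq, Fintype.card_congr E.eV, Fintype.card_sum]
  push_cast
  ring

/-- `s₁`; `leftLegs A` is `(A₁, -s₁)`, the new leg `ℓ'` of `Γ₁` being its last one. -/
def leftSum (A : Fin n → ℤ) : ℤ := ∑ j, A (E.σ.symm (.inl j))

def rightSum (A : Fin n → ℤ) : ℤ := ∑ j, A (E.σ.symm (.inr j))

def leftLegs (A : Fin n → ℤ) : Fin (n₁ + 1) → ℤ :=
  Fin.snoc (fun j => A (E.σ.symm (.inl j))) (-E.leftSum A)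

def rightLegs (A : Fin n → ℤ) : Fin (n₂ + 1) → ℤ :=
  Fin.snoc (fun j => A (E.σ.symm (.inr j))) (-E.rightSum A)

theorem leftSum_add_rightSum {A : Fin n → ℤ} (hA : ∑ i, A i = 0) :
    E.leftSum A + E.rightSum A = 0 := by
  rw [leftSum, rightSum, ← Fintype.sum_sum_type fun x => A (E.σ.symm x), E.σ.symm.sum_comp, hA]

theorem eH_symm_leg_last : E.eH.symm (.inl (G₁.leg (Fin.last n₁))) = h₁ := by
  rw [Equiv.symm_apply_eq, E.map_h₁]

theorem eH_symm_leg_castSucc (j : Fin n₁) :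
    E.eH.symm (.inl (G₁.leg j.castSucc)) = G.leg (E.σ.symm (.inl j)) := by
  rw [Equiv.symm_apply_eq, E.leg_compat, Equiv.apply_symm_apply, Sum.map_inl]

theorem root_eH_symm_inl (a : G₁.H) :
    G.root (E.eH.symm (.inl a)) = E.eV.symm (.inl (G₁.root a)) := by
  rw [Equiv.eq_symm_apply, E.root_compat, Equiv.apply_symm_apply, Sum.map_inl]

theorem eH_ι_of_eH_eq_inl {h : G.H} {a : G₁.H} (hh : E.eH h = .inl a) (ha : G₁.ι a ≠ a) :
    E.eH (G.ι h) = .inl (G₁.ι a) := by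
  have hh₁ : h ≠ h₁ := by
    rintro rfl
    rw [E.map_h₁, Sum.inl.injEq] at hh
    exact ha (hh ▸ (G₁.leg_iff _).2 ⟨_, rfl⟩)
  have hh₂ : h ≠ h₂ := by
    rintro rfl
    rw [E.map_h₂] at hh
    exact Sum.inr_ne_inl hh
  rw [E.ι_compat h hh₁ hh₂, hh, Sum.map_inl]

section Restrict

variable {α : Type*}

def restrictLeft (w : G.H → α) : G₁.H → α := fun a => w (E.eH.symm (.inl a))

def restrictRight (w : G.H → α) : G₂.H → α := fun b => w (E.eH.symm (.inr b))

def glue (w₁ : G₁.H → α) (w₂ : G₂.H → α) : G.H → α := fun h => Sum.elim w₁ w₂ (E.eH h)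

theorem restrictLeft_glue (w₁ : G₁.H → α) (w₂ : G₂.H → α) :
    E.restrictLeft (E.glue w₁ w₂) = w₁ := by
  funext a
  simp [restrictLeft, glue]

theorem restrictRight_glue (w₁ : G₁.H → α) (w₂ : G₂.H → α) :
    E.restrictRight (E.glue w₁ w₂) = w₂ := by
  funext b
  simp [restrictRight, glue]

theorem glue_restrict (w : G.H → α) : E.glue (E.restrictLeft w) (E.restrictRight w) = w := by
  funext h
  change Sum.elim _ _ (E.eH h) = w h
  rcases hh : E.eH h with a | b
  · rw [Sum.elim_inl, restrictLeft, ← hh, Equiv.symm_apply_apply]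
  · rw [Sum.elim_inr, restrictRight, ← hh, Equiv.symm_apply_apply]

theorem comp_glue {β : Type*} (g : α → β) (w₁ : G₁.H → α) (w₂ : G₂.H → α) :
    (fun h => g (E.glue w₁ w₂ h)) = E.glue (fun a => g (w₁ a)) (fun b => g (w₂ b)) := by
  funext h
  simp only [glue]
  cases E.eH h <;> rfl

end Restrict

section Flow

variable {M : Type*} [AddCommGroup M]

theorem sum_fiber_restrictLeft (f : G.H → M) (v : G₁.V) :
    ∑ a ∈ univ.filter (fun a => G₁.root a = v), E.restrictLeft f a
      = ∑ h ∈ univ.filter (fun h => G.root h = E.eV.symm (.inl v)), f h := by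
  rw [sum_filter, sum_filter, ← E.eH.symm.sum_comp, Fintype.sum_sum_type]
  simp [restrictLeft, root_eH_symm_inl, Equiv.eq_symm_apply, E.root_compat]

theorem sum_fiber_restrictRight (f : G.H → M) (v : G₂.V) :
    ∑ b ∈ univ.filter (fun b => G₂.root b = v), E.restrictRight f b
      = ∑ h ∈ univ.filter (fun h => G.root h = E.eV.symm (.inr v)), f h :=
  E.swap.sum_fiber_restrictLeft f v

theorem isFlow_restrictLeft {f : G.H → M} (hf : G.IsFlow f) : G₁.IsFlow (E.restrictLeft f) := by
  refine ⟨fun a ha => ?_, fun v => by rw [sum_fiber_restrictLeft]; exact hf.2 _⟩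
  have hx := E.eH.apply_symm_apply (.inl a)
  have hιx := E.eH_ι_of_eH_eq_inl hx ha
  have hne : G.ι (E.eH.symm (.inl a)) ≠ E.eH.symm (.inl a) := fun hfix =>
    ha (Sum.inl_injective (by rw [← hιx, hfix, hx]))
  simpa only [EdgeSplit.restrictLeft, ← hιx, Equiv.symm_apply_apply] using hf.1 _ hne

theorem apply_h₁_of_isFlow {f : G.H → M} (hf : G.IsFlow f) :
    f h₁ = -∑ j, f (G.leg (E.σ.symm (.inl j))) := by
  have h := (E.isFlow_restrictLeft hf).sum_legs_eq_zero
  rw [Fin.sum_univ_castSucc] at h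
  simp only [EdgeSplit.restrictLeft, eH_symm_leg_castSucc, eH_symm_leg_last] at h
  exact eq_neg_of_add_eq_zero_right h

theorem isFlow_glue {f₁ : G₁.H → M} {f₂ : G₂.H → M} (hf₁ : G₁.IsFlow f₁) (hf₂ : G₂.IsFlow f₂)
    (hcut : f₁ (G₁.leg (Fin.last n₁)) + f₂ (G₂.leg (Fin.last n₂)) = 0) :
    G.IsFlow (E.glue f₁ f₂) := by
  have hglue₁ : E.glue f₁ f₂ h₁ = f₁ (G₁.leg (Fin.last n₁)) := by simp [glue, E.map_h₁]
  have hglue₂ : E.glue f₁ f₂ h₂ = f₂ (G₂.leg (Fin.last n₂)) := by simp [glue, E.map_h₂]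
  refine ⟨fun h hh => ?_, fun v => ?_⟩
  · by_cases hh₁ : h = h₁
    · rw [hh₁, E.he, hglue₁, hglue₂, hcut]
    by_cases hh₂ : h = h₂
    · rw [hh₂, E.swap.he, hglue₁, hglue₂, add_comm, hcut]
    have hι := E.ι_compat h hh₁ hh₂
    simp only [glue, hι]
    rcases hx : E.eH h with a | b
    · exact hf₁.1 a fun ha => hh (E.eH.injective (by rw [hι, hx, Sum.map_inl, ha]))
    · exact hf₂.1 b fun hb => hh (E.eH.injective (by rw [hι, hx, Sum.map_inr, hb]))
  · rw [← E.eV.symm_apply_apply v]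
    rcases E.eV v with v₁ | v₂
    · rw [← sum_fiber_restrictLeft, restrictLeft_glue]
      exact hf₁.2 v₁
    · rw [← sum_fiber_restrictRight, restrictRight_glue]
      exact hf₂.2 v₂

end Flow

section Weightings

variable {A : Fin n → ℤ} {r : ℕ}

theorem restrictLeft_mem_weightings {w : G.H → Fin r} (hw : w ∈ G.weightings 0 A r) :
    E.restrictLeft w ∈ G₁.weightings 0 (E.leftLegs A) r := by
  rw [LegGraph.mem_weightings_zero_iff] at hw ⊢
  obtain ⟨hlegs, hflow⟩ := hw
  refine ⟨Fin.lastCases ?_ fun j => ?_, E.isFlow_restrictLeft hflow⟩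
  · simp [restrictLeft, eH_symm_leg_last, leftLegs, leftSum, E.apply_h₁_of_isFlow hflow, hlegs]
  · simp [restrictLeft, eH_symm_leg_castSucc, leftLegs, hlegs]

theorem restrictRight_mem_weightings {w : G.H → Fin r} (hw : w ∈ G.weightings 0 A r) :
    E.restrictRight w ∈ G₂.weightings 0 (E.rightLegs A) r :=
  E.swap.restrictLeft_mem_weightings hw

theorem glue_mem_weightings (hA : ∑ i, A i = 0) {w₁ : G₁.H → Fin r} {w₂ : G₂.H → Fin r}
    (hw₁ : w₁ ∈ G₁.weightings 0 (E.leftLegs A) r) (hw₂ : w₂ ∈ G₂.weightings 0 (E.rightLegs A) r) :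
    E.glue w₁ w₂ ∈ G.weightings 0 A r := by
  rw [LegGraph.mem_weightings_zero_iff] at hw₁ hw₂ ⊢
  obtain ⟨hlegs₁, hflow₁⟩ := hw₁
  obtain ⟨hlegs₂, hflow₂⟩ := hw₂
  refine ⟨fun i => ?_, ?_⟩
  · rw [← E.σ.symm_apply_apply i]
    rcases E.σ i with j | j
    · simpa [glue, E.leg_compat, leftLegs] using hlegs₁ j.castSucc
    · simpa [glue, E.leg_compat, rightLegs] using hlegs₂ j.castSucc
  · have hcast := E.comp_glue (fun x : Fin r => ((x : ℕ) : ZMod r)) w₁ w₂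
    rw [hcast]
    refine E.isFlow_glue hflow₁ hflow₂ ?_
    simp [hlegs₁, hlegs₂, leftLegs, rightLegs,
      eq_neg_of_add_eq_zero_left (E.leftSum_add_rightSum hA)]

theorem sum_weightings_mul {R : Type*} [CommSemiring R] (hA : ∑ i, A i = 0)
    (F₁ : (G₁.H → Fin r) → R) (F₂ : (G₂.H → Fin r) → R) :
    ∑ w ∈ G.weightings 0 A r, F₁ (E.restrictLeft w) * F₂ (E.restrictRight w)
      = (∑ w₁ ∈ G₁.weightings 0 (E.leftLegs A) r, F₁ w₁)
        * ∑ w₂ ∈ G₂.weightings 0 (E.rightLegs A) r, F₂ w₂ := by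
  rw [sum_mul_sum, ← sum_product']
  refine sum_nbij' (fun w => (E.restrictLeft w, E.restrictRight w)) (fun p => E.glue p.1 p.2)
    (fun w hw => mem_product.2 ⟨E.restrictLeft_mem_weightings hw,
      E.restrictRight_mem_weightings hw⟩)
    (fun p hp => E.glue_mem_weightings hA (mem_product.1 hp).1 (mem_product.1 hp).2)
    (fun w _ => E.glue_restrict w)
    (fun p _ => by rw [restrictLeft_glue, restrictRight_glue])
    (fun _ _ => rfl)

theorem val_apply_h₁ {w : G.H → Fin r} (hw : w ∈ G.weightings 0 A r) :
    ((w h₁ : ℕ) : ℤ) = (-E.leftSum A) % r := by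
  obtain ⟨hlegs, hflow⟩ := LegGraph.mem_weightings_zero_iff.1 hw
  have hmod : (((w h₁ : ℕ) : ℤ) : ZMod r) = ((-E.leftSum A : ℤ) : ZMod r) := by
    simpa [leftSum, hlegs] using E.apply_h₁_of_isFlow hflow
  rw [ZMod.intCast_eq_intCast_iff', Int.emod_eq_of_lt (by positivity) (by exact_mod_cast (w h₁).2)]
    at hmod
  exact hmod

theorem val_apply_h₂ {w : G.H → Fin r} (hw : w ∈ G.weightings 0 A r) :
    ((w h₂ : ℕ) : ℤ) = (-E.rightSum A) % r :=
  E.swap.val_apply_h₁ hw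

theorem S_eq_S_mul_S (hA : ∑ i, A i = 0) (c₁ c₂ : ℕ) (hι₁ : G.ι h₁ ≠ h₁)
    (hι₂ : G.ι h₂ ≠ h₂) {ψ₁ : G₁.NonLeg → G.NonLeg} (hψ₁ : ∀ a, E.eH (ψ₁ a).1 = .inl a.1)
    {ψ₂ : G₂.NonLeg → G.NonLeg} (hψ₂ : ∀ b, E.eH (ψ₂ b).1 = .inr b.1)
    (Q₁ : MvPolynomial G₁.NonLeg ℤ) (Q₂ : MvPolynomial G₂.NonLeg ℤ) (hr : r ≠ 0) :
    G.S 0 A (MvPolynomial.X (σ := G.NonLeg) ⟨h₁, hι₁⟩ ^ c₁ *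
        MvPolynomial.X (σ := G.NonLeg) ⟨h₂, hι₂⟩ ^ c₂ *
        MvPolynomial.rename ψ₁ Q₁ * MvPolynomial.rename ψ₂ Q₂) r
      = G₁.S 0 (E.leftLegs A) Q₁ r * (((-E.leftSum A) % r : ℤ) : ℚ) ^ c₁ *
        (((-E.rightSum A) % r : ℤ) : ℚ) ^ c₂ * G₂.S 0 (E.rightLegs A) Q₂ r := by
  have hψ₁' : ∀ a, (ψ₁ a).1 = E.eH.symm (.inl a.1) := fun a => by
    rw [← hψ₁, E.eH.symm_apply_apply]
  have hψ₂' : ∀ b, (ψ₂ b).1 = E.eH.symm (.inr b.1) := fun b => by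
    rw [← hψ₂, E.eH.symm_apply_apply]
  have heval : ∀ w ∈ G.weightings 0 A r,
      MvPolynomial.eval (fun h : G.NonLeg => ((w h.1 : ℕ) : ℤ))
        (MvPolynomial.X (σ := G.NonLeg) ⟨h₁, hι₁⟩ ^ c₁ *
          MvPolynomial.X (σ := G.NonLeg) ⟨h₂, hι₂⟩ ^ c₂ *
          MvPolynomial.rename ψ₁ Q₁ * MvPolynomial.rename ψ₂ Q₂)
      = ((-E.leftSum A) % r) ^ c₁ * ((-E.rightSum A) % r) ^ c₂ *
        (MvPolynomial.eval (fun a : G₁.NonLeg => ((E.restrictLeft w a.1 : Fin r) : ℤ)) Q₁ *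
          MvPolynomial.eval (fun b : G₂.NonLeg => ((E.restrictRight w b.1 : Fin r) : ℤ)) Q₂) := by
    intro w hw
    erw [map_mul, map_mul, map_mul, map_pow, map_pow, MvPolynomial.eval_X, MvPolynomial.eval_X,
      MvPolynomial.eval_rename, MvPolynomial.eval_rename, E.val_apply_h₁ hw, E.val_apply_h₂ hw]
    simp only [Function.comp_def, hψ₁', hψ₂', restrictLeft, restrictRight]
    ring
  have hsum := (sum_congr rfl heval).trans <| (mul_sum _ _ _).symm.trans <| congrArg _ <|
    E.sum_weightings_mul hA
      (fun w₁ => MvPolynomial.eval (fun a : G₁.NonLeg => ((w₁ a.1 : Fin r) : ℤ)) Q₁)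
      (fun w₂ => MvPolynomial.eval (fun b : G₂.NonLeg => ((w₂ b.1 : Fin r) : ℤ)) Q₂)
  simp only [LegGraph.S, ← Int.cast_sum, hsum, E.h1_eq, neg_add,
    zpow_add₀ (Nat.cast_ne_zero.2 hr : (r : ℚ) ≠ 0)]
  push_cast
  ring

end Weightings

end EdgeSplit

theorem separating_edge_S0_general {n n₁ n₂ : ℕ} (G : LegGraph n)
    (G₁ : LegGraph (n₁ + 1)) (G₂ : LegGraph (n₂ + 1)) (h₁ h₂ : G.H)
    (E : EdgeSplit G G₁ G₂ h₁ h₂)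
    (A : Fin n → ℤ) (hA : ∑ i, A i = 0)
    (s₁ s₂ : ℤ)
    (hs₁ : s₁ = ∑ j : Fin n₁, A (E.σ.symm (Sum.inl j)))
    (hs₂ : s₂ = ∑ j : Fin n₂, A (E.σ.symm (Sum.inr j)))
    (A₁ : Fin (n₁ + 1) → ℤ)
    (hA₁ : A₁ = Fin.snoc (fun j : Fin n₁ => A (E.σ.symm (Sum.inl j))) (-s₁))
    (A₂ : Fin (n₂ + 1) → ℤ)
    (hA₂ : A₂ = Fin.snoc (fun j : Fin n₂ => A (E.σ.symm (Sum.inr j))) (-s₂)) 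
    (c₁ c₂ : ℕ) (hι₁ : G.ι h₁ ≠ h₁) (hι₂ : G.ι h₂ ≠ h₂)
    (ψ₁ : G₁.NonLeg → G.NonLeg) (hψ₁ : ∀ h : G₁.NonLeg, E.eH (ψ₁ h).1 = Sum.inl h.1)
    (ψ₂ : G₂.NonLeg → G.NonLeg) (hψ₂ : ∀ h : G₂.NonLeg, E.eH (ψ₂ h).1 = Sum.inr h.1)
    (d₁ : G₁.NonLeg →₀ ℕ) (d₂ : G₂.NonLeg →₀ ℕ)
    (Q : MvPolynomial G.NonLeg ℤ)
    (hQ : Q = MvPolynomial.X (⟨h₁, hι₁⟩ : G.NonLeg) ^ c₁ *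
      MvPolynomial.X (⟨h₂, hι₂⟩ : G.NonLeg) ^ c₂ *
      MvPolynomial.rename ψ₁ (MvPolynomial.monomial d₁ 1) *
      MvPolynomial.rename ψ₂ (MvPolynomial.monomial d₂ 1))
    (hev₁ : EvPoly fun r => G₁.S 0 A₁ (MvPolynomial.monomial d₁ 1) r)
    (hev₂ : EvPoly fun r => G₂.S 0 A₂ (MvPolynomial.monomial d₂ 1) r) :
    G.S0 0 A Q = G₁.S0 0 A₁ (MvPolynomial.monomial d₁ 1) *
      ((-s₁ : ℤ) : ℚ) ^ c₁ * ((-s₂ : ℤ) : ℚ) ^ c₂ *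
      G₂.S0 0 A₂ (MvPolynomial.monomial d₂ 1) := by
  subst hQ hA₁ hA₂ hs₁ hs₂
  have hS := (eventually_ne_atTop 0).mono fun r hr =>
    (E.S_eq_S_mul_S hA c₁ c₂ hι₁ hι₂ hψ₁ hψ₂
      (MvPolynomial.monomial d₁ 1) (MvPolynomial.monomial d₂ 1) hr).symm
  exact ((((hev₁.hasConstTerm.mul ((hasConstTerm_intCast_emod _).pow c₁)).mul
    ((hasConstTerm_intCast_emod _).pow c₂)).mul hev₂.hasConstTerm).congr hS).constTerm_eq

/-- For a separating edge and a monomial `Q = x_{h₁}^{c₁} x_{h₂}^{c₂} Q₁ Q₂`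
as before, assuming the three sums are eventually polynomial in `r`, the constant terms
satisfy `S^Γ_{A,0}(Q) = S^{Γ₁}_{(A₁,-s₁),0}(Q₁) · (-s₁)^{c₁} (-s₂)^{c₂} ·
S^{Γ₂}_{(A₂,-s₂),0}(Q₂)`. -/
theorem separating_edge_S0 {n n₁ n₂ : ℕ} (G : LegGraph n)
    (G₁ : LegGraph (n₁ + 1)) (G₂ : LegGraph (n₂ + 1)) (h₁ h₂ : G.H)
    (E : EdgeSplit G G₁ G₂ h₁ h₂)
    (A : Fin n → ℤ) (hA : ∑ i, A i = 0)
    (s₁ s₂ : ℤ)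
    (hs₁ : s₁ = ∑ j : Fin n₁, A (E.σ.symm (Sum.inl j)))
    (hs₂ : s₂ = ∑ j : Fin n₂, A (E.σ.symm (Sum.inr j)))
    (A₁ : Fin (n₁ + 1) → ℤ)
    (hA₁ : A₁ = Fin.snoc (fun j : Fin n₁ => A (E.σ.symm (Sum.inl j))) (-s₁))
    (A₂ : Fin (n₂ + 1) → ℤ)
    (hA₂ : A₂ = Fin.snoc (fun j : Fin n₂ => A (E.σ.symm (Sum.inr j))) (-s₂)) 
    (c₁ c₂ : ℕ) (hι₁ : G.ι h₁ ≠ h₁) (hι₂ : G.ι h₂ ≠ h₂)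
    (ψ₁ : G₁.NonLeg → G.NonLeg) (hψ₁ : ∀ h : G₁.NonLeg, E.eH (ψ₁ h).1 = Sum.inl h.1)
    (ψ₂ : G₂.NonLeg → G.NonLeg) (hψ₂ : ∀ h : G₂.NonLeg, E.eH (ψ₂ h).1 = Sum.inr h.1)
    (d₁ : G₁.NonLeg →₀ ℕ) (d₂ : G₂.NonLeg →₀ ℕ)
    (Q : MvPolynomial G.NonLeg ℤ)
    (hQ : Q = MvPolynomial.X (⟨h₁, hι₁⟩ : G.NonLeg) ^ c₁ *
      MvPolynomial.X (⟨h₂, hι₂⟩ : G.NonLeg) ^ c₂ *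
      MvPolynomial.rename ψ₁ (MvPolynomial.monomial d₁ 1) *
      MvPolynomial.rename ψ₂ (MvPolynomial.monomial d₂ 1))
    (hev : EvPoly fun r => G.S 0 A Q r)
    (hev₁ : EvPoly fun r => G₁.S 0 A₁ (MvPolynomial.monomial d₁ 1) r)
    (hev₂ : EvPoly fun r => G₂.S 0 A₂ (MvPolynomial.monomial d₂ 1) r) :
    G.S0 0 A Q = G₁.S0 0 A₁ (MvPolynomial.monomial d₁ 1) *
      ((-s₁ : ℤ) : ℚ) ^ c₁ * ((-s₂ : ℤ) : ℚ) ^ c₂ *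
      G₂.S0 0 A₂ (MvPolynomial.monomial d₂ 1) :=
  separating_edge_S0_general G G₁ G₂ h₁ h₂ E A hA s₁ s₂ hs₁ hs₂ A₁ hA₁ A₂ hA₂ c₁ c₂ hι₁ hι₂ ψ₁ hψ₁
    ψ₂ hψ₂ d₁ d₂ Q hQ hev₁ hev₂
end

section
/- Let e = {h_1, h_2} be an edge of Γ such that the leg ℓ_1 is attached to r(h_1) and the leg ℓ_2 is attached to r(h_2). For a ∈ ℤ set A_a = (a_1 − a, a_2 + a, a_3, …, a_n). Then for every integer r ≥ 1 and every a ∈ ℤ, the map φ_a sending a weighting w to the function that agrees with w except that φ_a(w)(h_1) = (w(h_1)+a) mod r, φ_a(w)(h_2) = (w(h_2)−a) mod r, φ_a(w)(ℓ_1) = (a_1−a) mod r, and φ_a(w)(ℓ_2) = (a_2+a) mod r, is a bijection from W^Γ_{A,r} to W^Γ_{A_a,r}. -/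
open scoped BigOperators

section ShiftAux

lemma intFin_val {r : ℕ} (hr : 0 < r) (m : ℤ) : ((intFin r hr m : ℕ) : ℤ) = m % (r : ℤ) := by
  simp only [intFin]
  exact Int.toNat_of_nonneg (Int.emod_nonneg m (by exact_mod_cast hr.ne'))

lemma intFin_cast {r : ℕ} (hr : 0 < r) (m : ℤ) :
    (((intFin r hr m : ℕ)) : ZMod r) = (m : ZMod r) := by
  have h : (((intFin r hr m : ℕ) : ℤ) : ZMod r) = ((m % (r : ℤ)) : ZMod r) := by
    rw [intFin_val hr m]
  rw [ZMod.intCast_eq_intCast_iff'] at h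
  rw [← ZMod.intCast_eq_intCast_iff'] at h
  push_cast at h
  simpa using h

lemma eq_intFin {r : ℕ} (hr : 0 < r) (x : Fin r) (m : ℤ)
    (h : ((x : ℕ) : ZMod r) = (m : ZMod r)) : x = intFin r hr m := by
  haveI : NeZero r := ⟨hr.ne'⟩
  apply Fin.ext
  have h2 : ((x : ℕ) : ZMod r) = ((intFin r hr m : ℕ) : ZMod r) :=
    h.trans (intFin_cast hr m).symm
  have := congrArg ZMod.val h2
  rwa [ZMod.val_cast_of_lt x.isLt, ZMod.val_cast_of_lt (intFin r hr m).isLt] at this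

lemma emod_iff_zmod {r : ℕ} (x y : ℤ) :
    x % (r : ℤ) = y % (r : ℤ) ↔ (x : ZMod r) = (y : ZMod r) :=
  (ZMod.intCast_eq_intCast_iff' x y r).symm

namespace LegGraph

variable {n : ℕ}

/-- `IsWeighting` with twist `0`, reformulated in `ZMod r`. -/
lemma isWeighting_zero_iff (G : LegGraph n) (B : Fin n → ℤ) (r : ℕ) (w : G.H → Fin r) :
    G.IsWeighting 0 B r w ↔
      (∀ i : Fin n, ((w (G.leg i) : ℕ) : ZMod r) = (B i : ZMod r)) ∧
      (∀ h : G.H, G.ι h ≠ h →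
        ((w h : ℕ) : ZMod r) + ((w (G.ι h) : ℕ) : ZMod r) = 0) ∧
      (∀ v : G.V,
        (∑ h ∈ Finset.univ.filter (fun h : G.H => G.root h = v), ((w h : ℕ) : ZMod r)) = 0) := by
  unfold IsWeighting
  refine and_congr ?_ (and_congr ?_ ?_)
  · exact forall_congr' fun i => (emod_iff_zmod _ _).trans (by push_cast; exact Iff.rfl)
  · refine forall_congr' fun h => imp_congr Iff.rfl ?_
    rw [show (0 : ℤ) = 0 % (r : ℤ) by simp, emod_iff_zmod]
    push_cast
    rfl
  · refine forall_congr' fun v => ?_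
    rw [zero_mul, emod_iff_zmod]
    push_cast
    rfl

/-- The shift map `φ_a`. -/
def phiShift (G : LegGraph (n + 2)) (h₁ h₂ : G.H) {r : ℕ} (hr : 0 < r)
    (B0 B1 a : ℤ) (w : G.H → Fin r) : G.H → Fin r := fun h =>
  if h = h₁ then intFin r hr (((w h₁ : ℕ) : ℤ) + a)
  else if h = h₂ then intFin r hr (((w h₂ : ℕ) : ℤ) - a)
  else if h = G.leg 0 then intFin r hr (B0 - a)
  else if h = G.leg 1 then intFin r hr (B1 + a)
  else w h

section Facts

variable (G : LegGraph (n + 2)) {h₁ h₂ : G.H} (he : G.ι h₁ = h₂) (hne : h₁ ≠ h₂)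

include he hne in
lemma ne_facts :
    (∀ i, h₁ ≠ G.leg i) ∧ (∀ i, h₂ ≠ G.leg i) ∧ G.leg 0 ≠ G.leg 1 := by
  have hfix₁ : G.ι h₁ ≠ h₁ := by rw [he]; exact Ne.symm hne
  have he' : G.ι h₂ = h₁ := by rw [← he, G.ι_invol]
  have hfix₂ : G.ι h₂ ≠ h₂ := by rw [he']; exact hne
  refine ⟨fun i => Ne.symm (G.not_leg_of_not_fixed hfix₁ i),
    fun i => Ne.symm (G.not_leg_of_not_fixed hfix₂ i), fun h => ?_⟩
  have h2 := congrArg Fin.val (G.leg_inj h)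
  simp at h2

end Facts

/-- `φ_a` maps weightings for `B` to weightings for `C` when `C ≡ (B₀-a, B₁+a, B₂, …)`. -/
lemma phiShift_isWeighting (G : LegGraph (n + 2)) (h₁ h₂ : G.H)
    (he : G.ι h₁ = h₂) (hne : h₁ ≠ h₂)
    (hleg₁ : G.root h₁ = G.root (G.leg 0)) (hleg₂ : G.root h₂ = G.root (G.leg 1))
    (B C : Fin (n + 2) → ℤ) (a : ℤ) {r : ℕ} (hr : 0 < r)
    (hC0 : ((C 0 : ℤ) : ZMod r) = ((B 0 : ℤ) : ZMod r) - (a : ZMod r))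
    (hC1 : ((C 1 : ℤ) : ZMod r) = ((B 1 : ℤ) : ZMod r) + (a : ZMod r))
    (hCr : ∀ i : Fin (n + 2), i ≠ 0 → i ≠ 1 → ((C i : ℤ) : ZMod r) = ((B i : ℤ) : ZMod r))
    (w : G.H → Fin r) (hw : G.IsWeighting 0 B r w) :
    G.IsWeighting 0 C r (G.phiShift h₁ h₂ hr (B 0) (B 1) a w) := by
  obtain ⟨hL1, hL2, hL01⟩ := G.ne_facts he hne
  have he' : G.ι h₂ = h₁ := by rw [← he, G.ι_invol]
  have hfix₁ : G.ι h₁ ≠ h₁ := by rw [he]; exact Ne.symm hne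
  have hfix₂ : G.ι h₂ ≠ h₂ := by rw [he']; exact hne
  rw [G.isWeighting_zero_iff] at hw ⊢
  obtain ⟨hw1, hw2, hw3⟩ := hw
  -- pointwise description in ZMod r
  have hval : ∀ h : G.H,
      ((G.phiShift h₁ h₂ hr (B 0) (B 1) a w h : ℕ) : ZMod r) =
        ((w h : ℕ) : ZMod r) +
          (if h = h₁ then (a : ZMod r) else if h = h₂ then -(a : ZMod r)
           else if h = G.leg 0 then -(a : ZMod r) else if h = G.leg 1 then (a : ZMod r)
           else 0) := by
    intro h
    unfold phiShift
    by_cases e1 : h = h₁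
    · subst e1; rw [if_pos rfl, if_pos rfl, intFin_cast]; push_cast; ring
    by_cases e2 : h = h₂
    · subst e2
      rw [if_neg e1, if_pos rfl, if_neg e1, if_pos rfl, intFin_cast]; push_cast; ring
    by_cases e3 : h = G.leg 0
    · subst e3
      rw [if_neg e1, if_neg e2, if_pos rfl, if_neg e1, if_neg e2, if_pos rfl, intFin_cast]
      rw [hw1 0]; push_cast; ring
    by_cases e4 : h = G.leg 1
    · subst e4
      rw [if_neg e1, if_neg e2, if_neg e3, if_pos rfl, if_neg e1, if_neg e2, if_neg e3,
        if_pos rfl, intFin_cast]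
      rw [hw1 1]; push_cast; ring
    · rw [if_neg e1, if_neg e2, if_neg e3, if_neg e4, if_neg e1, if_neg e2, if_neg e3,
        if_neg e4, add_zero]
  refine ⟨?_, ?_, ?_⟩
  · intro i
    by_cases hi0 : i = 0
    · subst hi0
      rw [hval, if_neg (Ne.symm (hL1 0)), if_neg (Ne.symm (hL2 0)), if_pos rfl, hw1 0, hC0]
      ring
    by_cases hi1 : i = 1
    · subst hi1
      rw [hval, if_neg (Ne.symm (hL1 1)), if_neg (Ne.symm (hL2 1)),
        if_neg (Ne.symm hL01), if_pos rfl, hw1 1, hC1]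
    · have g0 : G.leg i ≠ G.leg 0 := fun h => hi0 (G.leg_inj h)
      have g1 : G.leg i ≠ G.leg 1 := fun h => hi1 (G.leg_inj h)
      rw [hval, if_neg (Ne.symm (hL1 i)), if_neg (Ne.symm (hL2 i)), if_neg g0, if_neg g1,
        add_zero, hw1 i, hCr i hi0 hi1]
  · intro h hh
    by_cases e1 : h = h₁
    · rw [e1, he, hval, hval, if_pos rfl, if_neg (Ne.symm hne), if_pos rfl]
      have h5 := hw2 h₁ hfix₁
      rw [he] at h5
      linear_combination h5
    by_cases e2 : h = h₂
    · rw [e2, he', hval, hval, if_neg (Ne.symm hne), if_pos rfl, if_pos rfl]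
      have h5 := hw2 h₂ hfix₂
      rw [he'] at h5
      linear_combination h5
    · have f1 : G.ι h ≠ h₁ := fun hc => e2 (by rw [← G.ι_invol h, hc, he])
      have f2 : G.ι h ≠ h₂ := fun hc => e1 (by rw [← G.ι_invol h, hc, he'])
      have hnl : ∀ i, h ≠ G.leg i := fun i hc =>
        hh (by rw [hc]; exact (G.leg_iff _).2 ⟨i, rfl⟩)
      have hnl' : ∀ i, G.ι h ≠ G.leg i := fun i hc => by
        have hfx : G.ι (G.leg i) = G.leg i := (G.leg_iff _).2 ⟨i, rfl⟩
        have h6 : h = G.leg i := by rw [← G.ι_invol h, hc, hfx]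
        exact hh (hc.trans h6.symm)
      rw [hval, hval, if_neg e1, if_neg e2, if_neg (hnl 0), if_neg (hnl 1),
        if_neg f1, if_neg f2, if_neg (hnl' 0), if_neg (hnl' 1), add_zero, add_zero]
      exact hw2 h hh
  · intro v
    have : (∑ h ∈ Finset.univ.filter (fun h : G.H => G.root h = v),
        ((G.phiShift h₁ h₂ hr (B 0) (B 1) a w h : ℕ) : ZMod r)) =
        (∑ h ∈ Finset.univ.filter (fun h : G.H => G.root h = v), ((w h : ℕ) : ZMod r)) +
        (∑ h ∈ Finset.univ.filter (fun h : G.H => G.root h = v),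
          (if h = h₁ then (a : ZMod r) else if h = h₂ then -(a : ZMod r)
           else if h = G.leg 0 then -(a : ZMod r) else if h = G.leg 1 then (a : ZMod r)
           else 0)) := by
      rw [← Finset.sum_add_distrib]
      exact Finset.sum_congr rfl fun h _ => hval h
    rw [this, hw3 v, zero_add]
    -- the correction sum vanishes
    have hsplit : (∑ h ∈ Finset.univ.filter (fun h : G.H => G.root h = v),
          (if h = h₁ then (a : ZMod r) else if h = h₂ then -(a : ZMod r)
           else if h = G.leg 0 then -(a : ZMod r) else if h = G.leg 1 then (a : ZMod r)
           else 0)) =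
        (∑ h ∈ Finset.univ.filter (fun h : G.H => G.root h = v),
          ((if h = h₁ then (a : ZMod r) else 0) + (if h = h₂ then -(a : ZMod r) else 0) +
           (if h = G.leg 0 then -(a : ZMod r) else 0) +
           (if h = G.leg 1 then (a : ZMod r) else 0))) := by
      refine Finset.sum_congr rfl fun h _ => ?_
      by_cases e1 : h = h₁
      · subst e1; simp [hne, hL1 0, hL1 1]
      by_cases e2 : h = h₂
      · subst e2; simp [Ne.symm hne, hL2 0, hL2 1]
      by_cases e3 : h = G.leg 0
      · subst e3; simp [Ne.symm (hL1 0), Ne.symm (hL2 0), hL01]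
      by_cases e4 : h = G.leg 1
      · subst e4; simp [Ne.symm (hL1 1), Ne.symm (hL2 1), Ne.symm hL01]
      · simp [e1, e2, e3, e4]
    rw [hsplit]
    rw [Finset.sum_add_distrib, Finset.sum_add_distrib, Finset.sum_add_distrib]
    rw [Finset.sum_ite_eq' _ h₁, Finset.sum_ite_eq' _ h₂,
      Finset.sum_ite_eq' _ (G.leg 0), Finset.sum_ite_eq' _ (G.leg 1)]
    simp only [Finset.mem_filter, Finset.mem_univ, true_and]
    rw [hleg₁, hleg₂]
    by_cases p0 : G.root (G.leg 0) = v <;> by_cases p1 : G.root (G.leg 1) = v <;>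
      simp [p0, p1]

/-- Composing two shifts with opposite parameters is the identity on weightings. -/
lemma phiShift_comp (G : LegGraph (n + 2)) (h₁ h₂ : G.H)
    (he : G.ι h₁ = h₂) (hne : h₁ ≠ h₂)
    (B0 B1 C0 C1 a b : ℤ) {r : ℕ} (hr : 0 < r)
    (hab : (a : ZMod r) + (b : ZMod r) = 0)
    (hC0 : ((C0 : ℤ) : ZMod r) = ((B0 : ℤ) : ZMod r) - (a : ZMod r))
    (hC1 : ((C1 : ℤ) : ZMod r) = ((B1 : ℤ) : ZMod r) + (a : ZMod r))
    (w : G.H → Fin r)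
    (hw0 : ((w (G.leg 0) : ℕ) : ZMod r) = ((B0 : ℤ) : ZMod r))
    (hw1 : ((w (G.leg 1) : ℕ) : ZMod r) = ((B1 : ℤ) : ZMod r)) :
    G.phiShift h₁ h₂ hr C0 C1 b (G.phiShift h₁ h₂ hr B0 B1 a w) = w := by
  obtain ⟨hL1, hL2, hL01⟩ := G.ne_facts he hne
  funext h
  unfold phiShift
  by_cases e1 : h = h₁
  · subst e1
    rw [if_pos rfl, if_pos rfl]
    refine (eq_intFin hr _ _ ?_).symm
    push_cast
    rw [intFin_cast]
    push_cast
    linear_combination -hab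
  by_cases e2 : h = h₂
  · subst e2
    rw [if_neg e1, if_pos rfl, if_neg e1, if_pos rfl]
    refine (eq_intFin hr _ _ ?_).symm
    push_cast
    rw [intFin_cast]
    push_cast
    linear_combination hab
  by_cases e3 : h = G.leg 0
  · subst e3
    rw [if_neg e1, if_neg e2, if_pos rfl]
    refine (eq_intFin hr _ _ ?_).symm
    rw [hw0]
    push_cast
    rw [hC0]
    linear_combination hab
  by_cases e4 : h = G.leg 1
  · subst e4
    rw [if_neg e1, if_neg e2, if_neg e3, if_pos rfl]
    refine (eq_intFin hr _ _ ?_).symm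
    rw [hw1]
    push_cast
    rw [hC1]
    linear_combination -hab
  · rw [if_neg e1, if_neg e2, if_neg e3, if_neg e4, if_neg e1, if_neg e2, if_neg e3, if_neg e4]

end LegGraph

end ShiftAux

/-- For an edge `e = {h₁, h₂}` with leg `ℓ₁` at the root of `h₁` and leg
`ℓ₂` at the root of `h₂`, and `A_a = (a₁-a, a₂+a, a₃, …, aₙ)`, the map `φ_a` (shifting the
values at `h₁`, `h₂`, `ℓ₁`, `ℓ₂` by `±a` mod `r`) is a bijection
`W^Γ_{A,r} ≅ W^Γ_{A_a,r}`. -/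
theorem shift_weightings_bijection {n : ℕ} (G : LegGraph (n + 2)) (hG : G.Connected)
    (h₁ h₂ : G.H) (he : G.ι h₁ = h₂) (hne : h₁ ≠ h₂)
    (hleg₁ : G.root h₁ = G.root (G.leg 0)) (hleg₂ : G.root h₂ = G.root (G.leg 1))
    (A : Fin (n + 2) → ℤ) (hA : ∑ i, A i = 0) (a : ℤ)
    (Aa : Fin (n + 2) → ℤ)
    (hAa : Aa = fun i => if i = 0 then A 0 - a else if i = 1 then A 1 + a else A i)
    (r : ℕ) (hr : 0 < r) :
    Set.BijOn
      (fun (w : G.H → Fin r) (h : G.H) =>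
        if h = h₁ then intFin r hr (((w h₁ : ℕ) : ℤ) + a)
        else if h = h₂ then intFin r hr (((w h₂ : ℕ) : ℤ) - a)
        else if h = G.leg 0 then intFin r hr (A 0 - a)
        else if h = G.leg 1 then intFin r hr (A 1 + a)
        else w h)
      (↑(G.weightings 0 A r)) (↑(G.weightings 0 Aa r)) := by
  have hmem : ∀ (B : Fin (n+2) → ℤ) (w : G.H → Fin r),
      w ∈ (↑(G.weightings 0 B r) : Set (G.H → Fin r)) ↔ G.IsWeighting 0 B r w := by
    intro B w
    simp [LegGraph.weightings]
  have key0 : ((Aa 0 : ℤ) : ZMod r) = ((A 0 : ℤ) : ZMod r) - (a : ZMod r) := by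
    rw [hAa]; push_cast; ring_nf; simp
  have key1 : ((Aa 1 : ℤ) : ZMod r) = ((A 1 : ℤ) : ZMod r) + (a : ZMod r) := by
    rw [hAa]; push_cast; ring_nf; simp
  have keyr : ∀ i : Fin (n+2), i ≠ 0 → i ≠ 1 → ((Aa i : ℤ) : ZMod r) = ((A i : ℤ) : ZMod r) := by
    intro i hi0 hi1; rw [hAa]; simp [hi0, hi1]
  have hfwd : Set.MapsTo (fun w => G.phiShift h₁ h₂ hr (A 0) (A 1) a w)
      (↑(G.weightings 0 A r)) (↑(G.weightings 0 Aa r)) := by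
    intro w hw
    rw [hmem] at hw ⊢
    exact G.phiShift_isWeighting h₁ h₂ he hne hleg₁ hleg₂ A Aa a hr key0 key1 keyr w hw
  have hbwd : Set.MapsTo (fun w => G.phiShift h₁ h₂ hr (Aa 0) (Aa 1) (-a) w)
      (↑(G.weightings 0 Aa r)) (↑(G.weightings 0 A r)) := by
    intro w hw
    rw [hmem] at hw ⊢
    refine G.phiShift_isWeighting h₁ h₂ he hne hleg₁ hleg₂ Aa A (-a) hr ?_ ?_ ?_ w hw
    · rw [key0]; push_cast; ring
    · rw [key1]; push_cast; ring
    · intro i hi0 hi1; rw [keyr i hi0 hi1]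
  have hinv : Set.InvOn (fun w => G.phiShift h₁ h₂ hr (Aa 0) (Aa 1) (-a) w)
      (fun w => G.phiShift h₁ h₂ hr (A 0) (A 1) a w)
      (↑(G.weightings 0 A r)) (↑(G.weightings 0 Aa r)) := by
    constructor
    · intro w hw
      rw [hmem, G.isWeighting_zero_iff] at hw
      exact G.phiShift_comp h₁ h₂ he hne (A 0) (A 1) (Aa 0) (Aa 1) a (-a) hr
        (by push_cast; ring) key0 key1 w (hw.1 0) (hw.1 1)
    · intro w hw
      rw [hmem, G.isWeighting_zero_iff] at hw
      exact G.phiShift_comp h₁ h₂ he hne (Aa 0) (Aa 1) (A 0) (A 1) (-a) a hr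
        (by push_cast; ring)
        (by rw [key0]; push_cast; ring) (by rw [key1]; push_cast; ring)
        w (hw.1 0) (hw.1 1)
  exact hinv.bijOn hfwd hbwd
end
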